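/- arXiv:1302.1763 — 9 statements merged into one kernel-verified Lean document; each statement's English description precedes it below -/
import Mathlib

section
/- Suppose z₀ and z₁ are positive reals satisfying z₁ = 1/(1 − g z₁ − 2 g z₀) and z₀ = z₁ + (𝔤−1)/(1 − g z₁ − g z₀), with 1 − g z₁ − 2gz₀ > 0 and 1 − g z₁ − g z₀ > 0. Then z₁ satisfies the quartic equation 3g² z₁⁴ − 4g z₁³ + (1 + 2g(1−2𝔤)) z₁² − 1 = 0. -/
/-- Multiplying the second relation by `4 g z₁²` and substituting `2 g z₀ z₁ = z₁ - g z₁² - 1`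
from the first one eliminates `z₀`. -/
theorem quartic_of_fixedPoint_mul_eq {R : Type*} [CommRing R] (g 𝔤 z₀ z₁ : R)
    (h₁ : z₁ * (1 - g * z₁ - 2 * g * z₀) = 1)
    (h₂ : (z₀ - z₁) * (1 - g * z₁ - g * z₀) = 𝔤 - 1) :
    3 * g ^ 2 * z₁ ^ 4 - 4 * g * z₁ ^ 3 + (1 + 2 * g * (1 - 2 * 𝔤)) * z₁ ^ 2 - 1 = 0 := by
  linear_combination (-2 * g * z₁ * z₀ + z₁ + g * z₁ ^ 2 + 1) * h₁ + 4 * g * z₁ ^ 2 * h₂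

theorem stmt_6_general (g 𝔤 z₀ z₁ : ℝ)
    (hden₁ : 0 < 1 - g * z₁ - 2 * g * z₀) (hden₂ : 0 < 1 - g * z₁ - g * z₀)
    (heq₁ : z₁ = 1 / (1 - g * z₁ - 2 * g * z₀))
    (heq₂ : z₀ = z₁ + (𝔤 - 1) / (1 - g * z₁ - g * z₀)) :
    3 * g ^ 2 * z₁ ^ 4 - 4 * g * z₁ ^ 3 + (1 + 2 * g * (1 - 2 * 𝔤)) * z₁ ^ 2 - 1 = 0 := by
  apply quartic_of_fixedPoint_mul_eq g 𝔤 z₀ z₁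
  · exact (eq_div_iff hden₁.ne').mp heq₁
  · exact (eq_div_iff hden₂.ne').mp (sub_eq_of_eq_add' heq₂)

/-- If `z₀, z₁ > 0` satisfy the recursion fixed-point equations
`z₁ = 1/(1 - g z₁ - 2g z₀)` and `z₀ = z₁ + (𝔤-1)/(1 - g z₁ - g z₀)` (with nonvanishing
denominators), then `z₁` satisfies the quartic
`3g² z₁⁴ - 4g z₁³ + (1 + 2g(1-2𝔤)) z₁² - 1 = 0`. -/
theorem stmt_6 (g 𝔤 z₀ z₁ : ℝ) (hg : 0 < g)
    (hz₀ : 0 < z₀) (hz₁ : 0 < z₁)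
    (hden₁ : 0 < 1 - g * z₁ - 2 * g * z₀) (hden₂ : 0 < 1 - g * z₁ - g * z₀)
    (heq₁ : z₁ = 1 / (1 - g * z₁ - 2 * g * z₀))
    (heq₂ : z₀ = z₁ + (𝔤 - 1) / (1 - g * z₁ - g * z₀)) :
    3 * g ^ 2 * z₁ ^ 4 - 4 * g * z₁ ^ 3 + (1 + 2 * g * (1 - 2 * 𝔤)) * z₁ ^ 2 - 1 = 0 :=
  stmt_6_general g 𝔤 z₀ z₁ hden₁ hden₂ heq₁ heq₂
end

section
/- Let λ > 0 and 𝔤_s > 0 with λ³ > (27/4)𝔤_s², and let α be the largest real root of α³ − λα + 𝔤_s = 0. Define Σ = (1/2)√(4α² − 2𝔤_s/α). Then Σ is well defined (4α² − 2𝔤_s/α > 0), and B := α − Σ together with Σ satisfy 𝔤_s = 2B(B² + 3BΣ + 2Σ²) and λ = 3B² + 6BΣ + Σ². -/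
/-!
Since `27 𝔤ₛ² < 4λ³`, the cubic `f(x) = x³ - λx + 𝔤ₛ` is negative at its local minimum
`s = √(λ/3)`, where `f(s) = 𝔤ₛ - 2s³`; as `f → ∞` it has a root beyond `s`, so the largest
root satisfies `3α² > λ`. Using `𝔤ₛ = λα - α³`, the radicand is
`4α² - 2𝔤ₛ/α = 6α² - 2λ > 0`, so `Σ² = (3α² - λ)/2`. The two identities are then
polynomial: `3B² + 6BΣ + Σ² = 3α² - 2Σ²` and `2B(B + Σ)(B + 2Σ) = 2α(α² - Σ²)`.
-/

open Filter

lemma tendsto_cubic_atTop (lam g : ℝ) :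
    Tendsto (fun x : ℝ => x ^ 3 - lam * x + g) atTop atTop := by
  refine tendsto_atTop_add_const_right _ g (tendsto_atTop_mono' _ ?_ tendsto_id)
  filter_upwards [eventually_ge_atTop (|lam| + 1)] with x hx
  have hx1 : 1 ≤ x := by linarith [abs_nonneg lam]
  have : lam + 1 ≤ x ^ 2 := by nlinarith [le_abs_self lam]
  show x ≤ x ^ 3 - lam * x
  nlinarith

lemma cubic_neg_of_three_mul_sq_eq {lam g s : ℝ} (hs : 0 < s) (hlam : lam = 3 * s ^ 2)
    (hdisc : 27 * g ^ 2 < 4 * lam ^ 3) : s ^ 3 - lam * s + g < 0 := by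
  subst hlam
  have hg : g ^ 2 < (2 * s ^ 3) ^ 2 := by nlinarith
  linarith [(abs_lt_of_sq_lt_sq' hg (by positivity)).2]

lemma exists_cubic_root_gt {lam g s : ℝ} (hs : s ^ 3 - lam * s + g < 0) :
    ∃ β, s < β ∧ β ^ 3 - lam * β + g = 0 :=
  intermediate_value_Ioi (by fun_prop) (tendsto_cubic_atTop lam g) hs

lemma pos_and_lam_lt_three_mul_sq_of_forall_root_le {lam g α : ℝ}
    (hdisc : 27 * g ^ 2 < 4 * lam ^ 3) (hmax : ∀ β : ℝ, β ^ 3 - lam * β + g = 0 → β ≤ α) :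
    0 < α ∧ lam < 3 * α ^ 2 := by
  have hlam : 0 < lam :=
    (Odd.pow_pos_iff (n := 3) (by decide)).1 (by nlinarith [sq_nonneg g])
  set s := Real.sqrt (lam / 3)
  have hs : 0 < s := Real.sqrt_pos.2 (by positivity)
  have hs_sq : lam = 3 * s ^ 2 := by rw [Real.sq_sqrt (by positivity)]; ring
  obtain ⟨β, hsβ, hβ⟩ := exists_cubic_root_gt (cubic_neg_of_three_mul_sq_eq hs hs_sq hdisc)
  have hsα : s < α := hsβ.trans_le (hmax β hβ)
  exact ⟨hs.trans hsα, by nlinarith⟩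

lemma four_mul_sq_sub_two_mul_div_eq {lam g α : ℝ} (hα : α ≠ 0)
    (hroot : α ^ 3 - lam * α + g = 0) : 4 * α ^ 2 - 2 * g / α = 6 * α ^ 2 - 2 * lam := by
  field_simp
  linear_combination -2 * hroot

section

variable {lam g α S : ℝ}

lemma lam_eq_of_two_mul_sq_eq (hS : 2 * S ^ 2 = 3 * α ^ 2 - lam) :
    lam = 3 * (α - S) ^ 2 + 6 * (α - S) * S + S ^ 2 := by
  linear_combination hS

lemma g_eq_of_two_mul_sq_eq (hroot : α ^ 3 - lam * α + g = 0)
    (hS : 2 * S ^ 2 = 3 * α ^ 2 - lam) :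
    g = 2 * (α - S) * ((α - S) ^ 2 + 3 * (α - S) * S + 2 * S ^ 2) := by
  linear_combination hroot + α * hS

end

theorem stmt_9_general (lam gs α : ℝ)
    (hcond : (27 / 4) * gs ^ 2 < lam ^ 3)
    (hroot : α ^ 3 - lam * α + gs = 0)
    (hmax : ∀ β : ℝ, β ^ 3 - lam * β + gs = 0 → β ≤ α) :
    0 < 4 * α ^ 2 - 2 * gs / α ∧
      (gs = 2 * (α - (1 / 2) * Real.sqrt (4 * α ^ 2 - 2 * gs / α)) *
          ((α - (1 / 2) * Real.sqrt (4 * α ^ 2 - 2 * gs / α)) ^ 2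
            + 3 * (α - (1 / 2) * Real.sqrt (4 * α ^ 2 - 2 * gs / α))
                * ((1 / 2) * Real.sqrt (4 * α ^ 2 - 2 * gs / α))
            + 2 * ((1 / 2) * Real.sqrt (4 * α ^ 2 - 2 * gs / α)) ^ 2) ∧
        lam = 3 * (α - (1 / 2) * Real.sqrt (4 * α ^ 2 - 2 * gs / α)) ^ 2
            + 6 * (α - (1 / 2) * Real.sqrt (4 * α ^ 2 - 2 * gs / α))
                * ((1 / 2) * Real.sqrt (4 * α ^ 2 - 2 * gs / α))
            + ((1 / 2) * Real.sqrt (4 * α ^ 2 - 2 * gs / α)) ^ 2) := by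
  obtain ⟨hα, hlam⟩ := pos_and_lam_lt_three_mul_sq_of_forall_root_le (by linarith) hmax
  have hrad := four_mul_sq_sub_two_mul_div_eq hα.ne' hroot
  have hpos : 0 < 4 * α ^ 2 - 2 * gs / α := by rw [hrad]; linarith
  have hS : 2 * ((1 / 2) * Real.sqrt (4 * α ^ 2 - 2 * gs / α)) ^ 2 = 3 * α ^ 2 - lam := by
    rw [mul_pow, Real.sq_sqrt hpos.le, hrad]; ring
  exact ⟨hpos, g_eq_of_two_mul_sq_eq hroot hS, lam_eq_of_two_mul_sq_eq hS⟩

/-- Let `λ > 0`, `𝔤ₛ > 0` with `λ³ > (27/4)𝔤ₛ²`, and let `α` be the largest real root of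
`α³ - λα + 𝔤ₛ = 0`. With `Σ := (1/2)√(4α² - 2𝔤ₛ/α)` one has `4α² - 2𝔤ₛ/α > 0`, and
`B := α - Σ` satisfies `𝔤ₛ = 2B(B² + 3BΣ + 2Σ²)` and `λ = 3B² + 6BΣ + Σ²`. -/
theorem stmt_9 (lam gs α : ℝ) (hlam : 0 < lam) (hgs : 0 < gs)
    (hcond : (27 / 4) * gs ^ 2 < lam ^ 3)
    (hroot : α ^ 3 - lam * α + gs = 0)
    (hmax : ∀ β : ℝ, β ^ 3 - lam * β + gs = 0 → β ≤ α) :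
    0 < 4 * α ^ 2 - 2 * gs / α ∧
      (gs = 2 * (α - (1 / 2) * Real.sqrt (4 * α ^ 2 - 2 * gs / α)) *
          ((α - (1 / 2) * Real.sqrt (4 * α ^ 2 - 2 * gs / α)) ^ 2
            + 3 * (α - (1 / 2) * Real.sqrt (4 * α ^ 2 - 2 * gs / α))
                * ((1 / 2) * Real.sqrt (4 * α ^ 2 - 2 * gs / α))
            + 2 * ((1 / 2) * Real.sqrt (4 * α ^ 2 - 2 * gs / α)) ^ 2) ∧
        lam = 3 * (α - (1 / 2) * Real.sqrt (4 * α ^ 2 - 2 * gs / α)) ^ 2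
            + 6 * (α - (1 / 2) * Real.sqrt (4 * α ^ 2 - 2 * gs / α))
                * ((1 / 2) * Real.sqrt (4 * α ^ 2 - 2 * gs / α))
            + ((1 / 2) * Real.sqrt (4 * α ^ 2 - 2 * gs / α)) ^ 2) :=
  stmt_9_general lam gs α hcond hroot hmax
end

section
/- Let λ, 𝔤_s, α, Σ be as follows: α > 0 satisfies α³ − λα + 𝔤_s = 0 and Σ = (1/2)√(4α² − 2𝔤_s/α) > 0. Define Z₁(T) = α + Σ²/(sinh(ΣT)(Σ cosh(ΣT) + α sinh(ΣT))) and Z₀(T) = (𝔤_s/(2α))(1 − Σ²/(Σ cosh(ΣT) + α sinh(ΣT))²) for T > 0. Then Z₁′(T) = λ − Z₁(T)² − 2Z₀(T) and Z₀′(T) = 2Z₁(T)Z₀(T) − 𝔤_s. -/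
/-!
Write `s = sinh(ΣT)`, `c = cosh(ΣT)` and `D = Σc + αs`, so that `D' = Σ(Σs + αc)` and, by
`c² - s² = 1`, `cD - Σ = s(Σs + αc)`. The equation for `Z₀` follows from this identity alone.
For `Z₁`, the cubic and the definition of `Σ` give `λ = α² + 𝔤ₛ/α` and
`𝔤ₛ/α = 2α² - 2Σ²`, which cancel the constant terms of `λ - Z₁² - 2Z₀`; what remains is the same
identity.
-/

open Real

noncomputable section

def amplitudeDenom (α S t : ℝ) : ℝ := S * cosh (S * t) + α * sinh (S * t)

def amplitude₁ (α S t : ℝ) : ℝ := α + S ^ 2 / (sinh (S * t) * amplitudeDenom α S t)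

def amplitude₀ (gs α S t : ℝ) : ℝ := gs / (2 * α) * (1 - S ^ 2 / amplitudeDenom α S t ^ 2)

end

lemma four_mul_sq_of_eq_half_sqrt {S x : ℝ} (h : S = 1 / 2 * √x) (hS : 0 < S) :
    4 * S ^ 2 = x := by
  have hx : 0 < x := sqrt_pos.1 (by linarith)
  rw [h, mul_pow, sq_sqrt hx.le]
  ring

lemma hasDerivAt_sinh_mul (S t : ℝ) :
    HasDerivAt (fun t => sinh (S * t)) (S * cosh (S * t)) t := by
  simpa [mul_comm] using ((hasDerivAt_id t).const_mul S).sinh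

lemma hasDerivAt_cosh_mul (S t : ℝ) :
    HasDerivAt (fun t => cosh (S * t)) (S * sinh (S * t)) t := by
  simpa [mul_comm] using ((hasDerivAt_id t).const_mul S).cosh

lemma hasDerivAt_amplitudeDenom (α S t : ℝ) :
    HasDerivAt (amplitudeDenom α S) (S * (S * sinh (S * t) + α * cosh (S * t))) t := by
  refine (((hasDerivAt_cosh_mul S t).const_mul S).add
    ((hasDerivAt_sinh_mul S t).const_mul α)).congr_deriv ?_
  ring

lemma cosh_mul_amplitudeDenom (α S t : ℝ) :
    cosh (S * t) * amplitudeDenom α S t - S =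
      sinh (S * t) * (S * sinh (S * t) + α * cosh (S * t)) := by
  unfold amplitudeDenom
  linear_combination S * cosh_sq_sub_sinh_sq (S * t)

lemma hasDerivAt_amplitude₀ {gs α S t : ℝ} (hα : α ≠ 0) (hs : sinh (S * t) ≠ 0)
    (hD : amplitudeDenom α S t ≠ 0) :
    HasDerivAt (amplitude₀ gs α S)
      (2 * amplitude₁ α S t * amplitude₀ gs α S t - gs) t := by
  have hcD := cosh_mul_amplitudeDenom α S t
  refine ((((hasDerivAt_const t (S ^ 2)).div ((hasDerivAt_amplitudeDenom α S t).pow 2)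
    (pow_ne_zero 2 hD)).const_sub 1).const_mul (gs / (2 * α))).congr_deriv ?_
  have hDdef : amplitudeDenom α S t = S * cosh (S * t) + α * sinh (S * t) := rfl
  simp only [amplitude₁, amplitude₀, Pi.pow_apply, Nat.cast_ofNat]
  generalize amplitudeDenom α S t = D at *
  field_simp
  linear_combination (-2 * gs * D * S ^ 3) * hcD + (-2 * gs * D ^ 2 * S ^ 2) * hDdef

lemma hasDerivAt_amplitude₁ {lam gs α S t : ℝ} (hα : α ≠ 0)
    (hlam : lam * α = α ^ 3 + gs) (hS : 2 * α * S ^ 2 = 2 * α ^ 3 - gs)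
    (hs : sinh (S * t) ≠ 0) (hD : amplitudeDenom α S t ≠ 0) :
    HasDerivAt (amplitude₁ α S)
      (lam - amplitude₁ α S t ^ 2 - 2 * amplitude₀ gs α S t) t := by
  have hcD := cosh_mul_amplitudeDenom α S t
  refine ((hasDerivAt_const t α).add ((hasDerivAt_const t (S ^ 2)).div
    ((hasDerivAt_sinh_mul S t).mul (hasDerivAt_amplitudeDenom α S t))
    (mul_ne_zero hs hD))).congr_deriv ?_
  have hDdef : amplitudeDenom α S t = S * cosh (S * t) + α * sinh (S * t) := rfl
  simp only [amplitude₁, amplitude₀, Pi.mul_apply]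
  generalize amplitudeDenom α S t = D at *
  generalize sinh (S * t) = s at *
  field_simp
  linear_combination (2 * α ^ 2 * S ^ 2 * s) * hDdef + (-α * S ^ 3) * hcD +
    (-s ^ 2 * D ^ 2) * hlam + (-s ^ 2 * S ^ 2) * hS

theorem stmt_10_general (lam gs α S T : ℝ) (hα : 0 < α)
    (hroot : α ^ 3 - lam * α + gs = 0)
    (hSdef : S = (1 / 2) * Real.sqrt (4 * α ^ 2 - 2 * gs / α)) (hS : 0 < S)
    (hT : 0 < T)
    (Z₁ Z₀ : ℝ → ℝ)
    (hZ₁ : Z₁ = fun t => α + S ^ 2 /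
      (Real.sinh (S * t) * (S * Real.cosh (S * t) + α * Real.sinh (S * t))))
    (hZ₀ : Z₀ = fun t => (gs / (2 * α)) *
      (1 - S ^ 2 / (S * Real.cosh (S * t) + α * Real.sinh (S * t)) ^ 2)) :
    HasDerivAt Z₁ (lam - (Z₁ T) ^ 2 - 2 * Z₀ T) T ∧
      HasDerivAt Z₀ (2 * Z₁ T * Z₀ T - gs) T := by
  have hS2 : 2 * α * S ^ 2 = 2 * α ^ 3 - gs := by
    have h := four_mul_sq_of_eq_half_sqrt hSdef hS
    field_simp at h
    linarith
  have hs : 0 < sinh (S * T) := sinh_pos_iff.2 (mul_pos hS hT)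
  have hD : 0 < amplitudeDenom α S T := by unfold amplitudeDenom; positivity
  subst hZ₁ hZ₀
  exact ⟨hasDerivAt_amplitude₁ hα.ne' (by linarith) hS2 hs.ne' hD.ne',
    hasDerivAt_amplitude₀ hα.ne' hs.ne' hD.ne'⟩

/-- With `α > 0` solving `α³ - λα + 𝔤ₛ = 0` and `Σ = (1/2)√(4α² - 2𝔤ₛ/α) > 0`, the
continuum amplitudes
`Z₁(T) = α + Σ²/(sinh(ΣT)(Σcosh(ΣT) + αsinh(ΣT)))` and
`Z₀(T) = (𝔤ₛ/(2α))(1 - Σ²/(Σcosh(ΣT) + αsinh(ΣT))²)`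
satisfy `Z₁' = λ - Z₁² - 2Z₀` and `Z₀' = 2Z₁Z₀ - 𝔤ₛ` for `T > 0`. -/
theorem stmt_10 (lam gs α S T : ℝ) (hα : 0 < α) (hgs : 0 < gs)
    (hroot : α ^ 3 - lam * α + gs = 0)
    (hSdef : S = (1 / 2) * Real.sqrt (4 * α ^ 2 - 2 * gs / α)) (hS : 0 < S)
    (hT : 0 < T)
    (Z₁ Z₀ : ℝ → ℝ)
    (hZ₁ : Z₁ = fun t => α + S ^ 2 /
      (Real.sinh (S * t) * (S * Real.cosh (S * t) + α * Real.sinh (S * t))))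
    (hZ₀ : Z₀ = fun t => (gs / (2 * α)) *
      (1 - S ^ 2 / (S * Real.cosh (S * t) + α * Real.sinh (S * t)) ^ 2)) :
    HasDerivAt Z₁ (lam - (Z₁ T) ^ 2 - 2 * Z₀ T) T ∧
      HasDerivAt Z₀ (2 * Z₁ T * Z₀ T - gs) T :=
  stmt_10_general lam gs α S T hα hroot hSdef hS hT Z₁ Z₀ hZ₁ hZ₀
end

section
/- With α, Σ, λ, 𝔤_s and Z₁(T) as above (α³ − λα + 𝔤_s = 0, Σ² = α² − 𝔤_s/(2α) > 0), the function Z₁(T) = α + Σ²/(sinh(ΣT)(Σ cosh(ΣT) + α sinh(ΣT))) satisfies Z₁″(T) = 2(Z₁(T)³ − λ Z₁(T) + 𝔤_s) for all T > 0. -/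
/-!
Doubling the angle, the denominator `D(t) = sinh(St)(S cosh(St) + α sinh(St))` becomes
`(S sinh(2St) + α (cosh(2St) - 1)) / 2`, which solves the linear equation `D'' = 4S²D + 2αS²` and
has the first integral `D'² = 4S²D² + 4αS²D + S⁴`. For `Z = α + S²/D` this turns
`Z'' = -S²D''/D² + 2S²D'²/D³` into a cubic polynomial in `w = S²/D`, and the root condition on `α`
together with the definition of `S` give `λ = 3α² - 2S²` and `𝔤ₛ = 2α³ - 2αS²`, which make it equal
to `2(Z³ - λZ + 𝔤ₛ)`.
-/

open Real Filter Topology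

lemma deriv_deriv_const_add_div {f f' : ℝ → ℝ} {f'' c k x : ℝ}
    (hf : ∀ᶠ t in 𝓝 x, HasDerivAt f (f' t) t) (hf' : HasDerivAt f' f'' x) (hx : f x ≠ 0) :
    deriv (deriv fun t => c + k / f t) x = -k * f'' / f x ^ 2 + 2 * k * f' x ^ 2 / f x ^ 3 := by
  have hne : ∀ᶠ t in 𝓝 x, f t ≠ 0 := hf.self_of_nhds.continuousAt.eventually_ne hx
  have hderiv : deriv (fun t => c + k / f t) =ᶠ[𝓝 x] fun t => -(k * f' t) / f t ^ 2 := by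
    filter_upwards [hf, hne] with t ht hft
    exact (((hasDerivAt_const t k).div ht hft).const_add c).deriv.trans (by ring)
  have hsq : HasDerivAt (fun t => f t ^ 2) (2 * f x * f' x) x := by
    simpa using hf.self_of_nhds.fun_pow 2
  rw [hderiv.deriv_eq]
  refine ((hf'.const_mul k).neg.div hsq (pow_ne_zero 2 hx)).deriv.trans ?_
  simp only [Pi.neg_apply]
  field_simp
  ring

section Denominator

variable (S α : ℝ)

noncomputable def sinhDenom (t : ℝ) : ℝ := (S * sinh (2 * S * t) + α * (cosh (2 * S * t) - 1)) / 2

noncomputable def sinhDenomDeriv (t : ℝ) : ℝ := S ^ 2 * cosh (2 * S * t) + α * S * sinh (2 * S * t)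

lemma sinh_mul_mul_add_eq_sinhDenom (t : ℝ) :
    sinh (S * t) * (S * cosh (S * t) + α * sinh (S * t)) = sinhDenom S α t := by
  rw [sinhDenom, mul_assoc 2 S t, sinh_two_mul, cosh_two_mul, cosh_sq]
  ring

lemma hasDerivAt_sinhDenom (t : ℝ) : HasDerivAt (sinhDenom S α) (sinhDenomDeriv S α t) t := by
  have hu : HasDerivAt (fun t => 2 * S * t) (2 * S) t := hasDerivAt_const_mul (2 * S)
  exact (((hu.sinh.const_mul S).add ((hu.cosh.sub_const 1).const_mul α)).div_const 2).congr_deriv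
    (by rw [sinhDenomDeriv]; ring)

lemma hasDerivAt_sinhDenomDeriv (t : ℝ) :
    HasDerivAt (sinhDenomDeriv S α) (4 * S ^ 2 * sinhDenom S α t + 2 * α * S ^ 2) t := by
  have hu : HasDerivAt (fun t => 2 * S * t) (2 * S) t := hasDerivAt_const_mul (2 * S)
  exact ((hu.cosh.const_mul (S ^ 2)).add (hu.sinh.const_mul (α * S))).congr_deriv
    (by rw [sinhDenom]; ring)

lemma sinhDenomDeriv_sq (t : ℝ) :
    sinhDenomDeriv S α t ^ 2 =
      4 * S ^ 2 * sinhDenom S α t ^ 2 + 4 * α * S ^ 2 * sinhDenom S α t + S ^ 4 := by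
  rw [sinhDenomDeriv, sinhDenom]
  linear_combination (S ^ 4 - α ^ 2 * S ^ 2) * cosh_sq_sub_sinh_sq (2 * S * t)

lemma sinhDenom_pos {S α t : ℝ} (hS : 0 < S) (hα : 0 ≤ α) (ht : 0 < t) : 0 < sinhDenom S α t := by
  have hsinh : 0 < sinh (S * t) := sinh_pos_iff.2 (mul_pos hS ht)
  rw [← sinh_mul_mul_add_eq_sinhDenom]
  have := cosh_pos (S * t)
  positivity

end Denominator

theorem stmt_11_general (lam gs α S T : ℝ) (hα : 0 < α)
    (hroot : α ^ 3 - lam * α + gs = 0)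
    (hpos : 0 < α ^ 2 - gs / (2 * α))
    (hSdef : S = Real.sqrt (α ^ 2 - gs / (2 * α)))
    (hT : 0 < T)
    (Z₁ : ℝ → ℝ)
    (hZ₁ : Z₁ = fun t => α + S ^ 2 /
      (Real.sinh (S * t) * (S * Real.cosh (S * t) + α * Real.sinh (S * t)))) :
    deriv (deriv Z₁) T = 2 * ((Z₁ T) ^ 3 - lam * Z₁ T + gs) := by
  have hS : 0 < S := hSdef ▸ sqrt_pos.2 hpos
  have hS2 : S ^ 2 = α ^ 2 - gs / (2 * α) := hSdef ▸ sq_sqrt hpos.le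
  have hgs : gs = 2 * α ^ 3 - 2 * α * S ^ 2 := by
    field_simp at hS2
    linarith
  have hlam : lam = 3 * α ^ 2 - 2 * S ^ 2 := by
    apply mul_right_cancel₀ hα.ne'
    linear_combination -hroot + hgs
  have hZ : Z₁ = fun t => α + S ^ 2 / sinhDenom S α t := by
    simp only [hZ₁, sinh_mul_mul_add_eq_sinhDenom]
  have hD : sinhDenom S α T ≠ 0 := (sinhDenom_pos hS hα.le hT).ne'
  rw [hZ, deriv_deriv_const_add_div (.of_forall (hasDerivAt_sinhDenom S α))
    (hasDerivAt_sinhDenomDeriv S α T) hD, sinhDenomDeriv_sq, hlam, hgs]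
  field_simp
  ring

/-- With `α > 0` solving `α³ - λα + 𝔤ₛ = 0` and `Σ = √(α² - 𝔤ₛ/(2α)) > 0`, the function
`Z₁(T) = α + Σ²/(sinh(ΣT)(Σcosh(ΣT) + αsinh(ΣT)))` satisfies the second-order ODE
`Z₁'' = 2(Z₁³ - λZ₁ + 𝔤ₛ)` for all `T > 0`. -/
theorem stmt_11 (lam gs α S T : ℝ) (hα : 0 < α) (hgs : 0 < gs)
    (hroot : α ^ 3 - lam * α + gs = 0)
    (hpos : 0 < α ^ 2 - gs / (2 * α))
    (hSdef : S = Real.sqrt (α ^ 2 - gs / (2 * α)))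
    (hT : 0 < T)
    (Z₁ : ℝ → ℝ)
    (hZ₁ : Z₁ = fun t => α + S ^ 2 /
      (Real.sinh (S * t) * (S * Real.cosh (S * t) + α * Real.sinh (S * t)))) :
    deriv (deriv Z₁) T = 2 * ((Z₁ T) ^ 3 - lam * Z₁ T + gs) :=
  stmt_11_general lam gs α S T hα hroot hpos hSdef hT Z₁ hZ₁
end

section
/- With α, Σ, 𝔤_s as above and Z₁(T) = α + Σ²/(sinh(ΣT)(Σ cosh(ΣT) + α sinh(ΣT))), one has Z₁′(T) = −(Z₁(T) − α)·√((Z₁(T) + α)² − 2𝔤_s/α) for all T > 0. -/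
/-!
Put `u = ΣT`, `s = sinh u`, `c = cosh u` and `f = s (Σc + αs)`, so that `Z₁ - α = Σ²/f` and
`f' = Σ X` with `X = Σ(c² + s²) + 2αsc`. Since `2𝔤ₛ/α = 4(α² - Σ²)`, the radicand is
`(2α + Σ²/f)² - 4α² + 4Σ² = Σ²(4f² + 4αf + Σ²)/f²`, and `c² = 1 + s²` makes
`4f² + 4αf + Σ² = X²`. Hence the square root is `ΣX/f` and
`-(Z₁ - α)·ΣX/f = -Σ² f'/f² = Z₁'`.
-/

open Real

theorem hasDerivAt_sinh_mul_cosh_add (α S t : ℝ) :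
    HasDerivAt (fun t => sinh (S * t) * (S * cosh (S * t) + α * sinh (S * t)))
      (S * (S * (cosh (S * t) ^ 2 + sinh (S * t) ^ 2) + 2 * α * sinh (S * t) * cosh (S * t)))
      t := by
  have hlin : HasDerivAt (fun t : ℝ => S * t) S t := by
    simpa using (hasDerivAt_id t).const_mul S
  have hsum : HasDerivAt (fun t => S * cosh (S * t) + α * sinh (S * t))
      (S * (sinh (S * t) * S) + α * (cosh (S * t) * S)) t :=
    (hlin.cosh.const_mul S).add (hlin.sinh.const_mul α)
  exact (hlin.sinh.mul hsum).congr_deriv (by ring)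

theorem sq_deriv_eq_of_cosh_sq {R : Type*} [CommRing R] (α S s c : R) (h : c ^ 2 = 1 + s ^ 2) :
    (S * (c ^ 2 + s ^ 2) + 2 * α * s * c) ^ 2
      = 4 * (s * (S * c + α * s)) ^ 2 + 4 * α * (s * (S * c + α * s)) + S ^ 2 := by
  linear_combination (S ^ 2 * (c ^ 2 + 1 - s ^ 2) + 4 * α * S * s * c + 4 * α ^ 2 * s ^ 2) * h

theorem neg_sub_mul_sqrt_eq {α S f D : ℝ} (hf : 0 < f) (hD : 0 ≤ D)
    (hDsq : D ^ 2 = S ^ 2 * (4 * f ^ 2 + 4 * α * f + S ^ 2)) :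
    -(α + S ^ 2 / f - α) * √((α + S ^ 2 / f + α) ^ 2 - 4 * (α ^ 2 - S ^ 2))
      = (0 * f - S ^ 2 * D) / f ^ 2 := by
  have hrad : (α + S ^ 2 / f + α) ^ 2 - 4 * (α ^ 2 - S ^ 2) = (D / f) ^ 2 := by
    rw [div_pow, hDsq]
    field_simp
    ring
  rw [hrad, sqrt_sq (div_nonneg hD hf.le)]
  field_simp
  ring

theorem stmt_12_general (gs α S T : ℝ) (hα : 0 < α)
    (hpos : 0 < α ^ 2 - gs / (2 * α))
    (hSdef : S = Real.sqrt (α ^ 2 - gs / (2 * α)))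
    (hT : 0 < T)
    (Z₁ : ℝ → ℝ)
    (hZ₁ : Z₁ = fun t => α + S ^ 2 /
      (Real.sinh (S * t) * (S * Real.cosh (S * t) + α * Real.sinh (S * t)))) :
    HasDerivAt Z₁
      (-(Z₁ T - α) * Real.sqrt ((Z₁ T + α) ^ 2 - 2 * gs / α)) T := by
  have hS : 0 < S := hSdef ▸ sqrt_pos.mpr hpos
  have hgs : 2 * gs / α = 4 * (α ^ 2 - S ^ 2) := by
    rw [hSdef, sq_sqrt hpos.le]
    field_simp
    ring
  have hs : 0 < sinh (S * T) := sinh_pos_iff.mpr (mul_pos hS hT)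
  have hf : 0 < sinh (S * T) * (S * cosh (S * T) + α * sinh (S * T)) := by positivity
  subst hZ₁
  refine (((hasDerivAt_const T (S ^ 2)).div (hasDerivAt_sinh_mul_cosh_add α S T)
    hf.ne').const_add α).congr_deriv ?_
  beta_reduce
  rw [hgs]
  refine (neg_sub_mul_sqrt_eq hf (by positivity) ?_).symm
  rw [mul_pow, sq_deriv_eq_of_cosh_sq α S _ _ (cosh_sq' _)]

/-- With `α > 0` solving `α³ - λα + 𝔤ₛ = 0` and `Σ = √(α² - 𝔤ₛ/(2α)) > 0`, the function
`Z₁(T) = α + Σ²/(sinh(ΣT)(Σcosh(ΣT) + αsinh(ΣT)))` satisfies the characteristic equation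
`Z₁'(T) = -(Z₁(T) - α)·√((Z₁(T) + α)² - 2𝔤ₛ/α)` for all `T > 0`. -/
theorem stmt_12 (lam gs α S T : ℝ) (hα : 0 < α) (hgs : 0 < gs)
    (hroot : α ^ 3 - lam * α + gs = 0)
    (hpos : 0 < α ^ 2 - gs / (2 * α))
    (hSdef : S = Real.sqrt (α ^ 2 - gs / (2 * α)))
    (hT : 0 < T)
    (Z₁ : ℝ → ℝ)
    (hZ₁ : Z₁ = fun t => α + S ^ 2 /
      (Real.sinh (S * t) * (S * Real.cosh (S * t) + α * Real.sinh (S * t)))) :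
    HasDerivAt Z₁
      (-(Z₁ T - α) * Real.sqrt ((Z₁ T + α) ^ 2 - 2 * gs / α)) T :=
  stmt_12_general gs α S T hα hpos hSdef hT Z₁ hZ₁
end

section
/- Let λ > 0 and let W(X) = (−(X² − λ) + (X − α)√((X+α)² − 2𝔤_s/α))/(2𝔤_s) with α the largest root of α³ − λα + 𝔤_s = 0 and 0 < 𝔤_s small enough that 27𝔤_s² < 4λ³. Then X·W(X) → 1 as X → ∞. -/
/-!
Rationalising, `X · W(X) = X · ((X - α)² D - (X² - λ)²) / (2𝔤ₛ ((X - α)√D + X² - λ))` with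
`D = (X + α)² - 2𝔤ₛ/α`. The numerator `(X - α)² D - (X² - λ)²` is a priori a quartic in `X`;
its quartic and cubic terms cancel, and its `X²` coefficient `2(λα - α³ - 𝔤ₛ)/α` vanishes precisely
because `α` solves `α³ - λα + 𝔤ₛ = 0`, leaving `4𝔤ₛ X + const`. The denominator is `4𝔤ₛ X² (1 + o(1))`, since
`√D / X → 1`, so `X · W(X) → 1`.
-/

open Filter Topology

lemma tendsto_sqrt_add_sq_sub_div_atTop (a b : ℝ) :
    Tendsto (fun X => √((X + a) ^ 2 - b) / X) atTop (𝓝 1) := by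
  have hcont : Tendsto (fun u : ℝ => √((1 + a * u) ^ 2 - b * u ^ 2)) (𝓝 0) (𝓝 1) := by
    have : Continuous fun u : ℝ => √((1 + a * u) ^ 2 - b * u ^ 2) := by fun_prop
    simpa using this.tendsto 0
  refine (hcont.comp tendsto_inv_atTop_zero).congr' ?_
  filter_upwards [eventually_gt_atTop 0] with X hX
  have harg : (1 + a * X⁻¹) ^ 2 - b * X⁻¹ ^ 2 = ((X + a) ^ 2 - b) / X ^ 2 := by
    field_simp
  rw [Function.comp_apply, harg, Real.sqrt_div' _ (sq_nonneg X), Real.sqrt_sq hX.le]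

lemma tendsto_sub_mul_sqrt_add_sq_div_sq_atTop (a b c : ℝ) :
    Tendsto (fun X => ((X - a) * √((X + a) ^ 2 - b) + (X ^ 2 - c)) / X ^ 2) atTop (𝓝 2) := by
  have h : Tendsto (fun X : ℝ => (1 - a * X⁻¹) * (√((X + a) ^ 2 - b) / X) + (1 - c * X⁻¹ ^ 2))
      atTop (𝓝 ((1 - a * 0) * 1 + (1 - c * 0 ^ 2))) :=
    ((tendsto_const_nhds.sub (tendsto_inv_atTop_zero.const_mul a)).mul
      (tendsto_sqrt_add_sq_sub_div_atTop a b)).add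
      (tendsto_const_nhds.sub ((tendsto_inv_atTop_zero.pow 2).const_mul c))
  norm_num at h
  refine h.congr' ?_
  filter_upwards [eventually_ne_atTop 0] with X hX
  field_simp

lemma sub_sq_mul_sub_sub_sq_eq_of_cubic {lam gs α : ℝ} (hα : α ≠ 0)
    (hroot : α ^ 3 - lam * α + gs = 0) (X : ℝ) :
    (X - α) ^ 2 * ((X + α) ^ 2 - 2 * gs / α) - (X ^ 2 - lam) ^ 2
      = 4 * gs * X + (α ^ 4 - lam ^ 2 - 2 * gs * α) := by
  field_simp
  linear_combination (-2 * X ^ 2) * hroot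

theorem stmt_15_general (lam gs α : ℝ) (hgs : 0 < gs)
    (hroot : α ^ 3 - lam * α + gs = 0) :
    Filter.Tendsto
      (fun X : ℝ => X * ((-(X ^ 2 - lam) +
        (X - α) * Real.sqrt ((X + α) ^ 2 - 2 * gs / α)) / (2 * gs)))
      Filter.atTop (nhds 1) := by
  have hα : α ≠ 0 := by
    rintro rfl
    linarith
  set D : ℝ → ℝ := fun X => (X + α) ^ 2 - 2 * gs / α
  set den : ℝ → ℝ := fun X => 2 * gs * (((X - α) * √(D X) + (X ^ 2 - lam)) / X ^ 2)
  have hden : Tendsto den atTop (𝓝 (4 * gs)) := by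
    convert (tendsto_sub_mul_sqrt_add_sq_div_sq_atTop α (2 * gs / α) lam).const_mul (2 * gs)
      using 2
    ring
  have hD : ∀ᶠ X in atTop, 0 ≤ D X :=
    (tendsto_atTop_add_const_right _ (-(2 * gs / α)) ((tendsto_pow_atTop two_ne_zero).comp
      (tendsto_atTop_add_const_right _ α tendsto_id))).eventually_ge_atTop 0
  set K := α ^ 4 - lam ^ 2 - 2 * gs * α
  have hmul : ∀ᶠ X in atTop, X * ((-(X ^ 2 - lam) + (X - α) * √(D X)) / (2 * gs)) * den X
      = 4 * gs + K * X⁻¹ := by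
    filter_upwards [hD, eventually_gt_atTop 0] with X hDX hX
    have hS := Real.sq_sqrt hDX
    have key := sub_sq_mul_sub_sub_sq_eq_of_cubic hα hroot X
    simp only [den]
    field_simp
    linear_combination key + (X - α) ^ 2 * hS
  have hnum : Tendsto (fun X : ℝ => 4 * gs + K * X⁻¹) atTop (𝓝 (4 * gs)) := by
    simpa using (tendsto_const_nhds (x := 4 * gs)).add (tendsto_inv_atTop_zero.const_mul K)
  have hlim := hnum.div hden (by positivity)
  rw [div_self (by positivity)] at hlim
  refine hlim.congr' ?_
  filter_upwards [hmul, hden.eventually_ne (by positivity)] with X hX hne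
  rw [Pi.div_apply, ← hX, mul_div_cancel_right₀ _ hne]

/-- For `λ > 0`, `0 < 𝔤ₛ` with `27𝔤ₛ² < 4λ³`, and `α` the largest root of
`α³ - λα + 𝔤ₛ = 0`, the generalized CDT disk amplitude
`W(X) = (-(X² - λ) + (X - α)√((X+α)² - 2𝔤ₛ/α))/(2𝔤ₛ)` satisfies `X·W(X) → 1` as
`X → ∞`. -/
theorem stmt_15 (lam gs α : ℝ) (hlam : 0 < lam) (hgs : 0 < gs)
    (hcond : 27 * gs ^ 2 < 4 * lam ^ 3)
    (hroot : α ^ 3 - lam * α + gs = 0)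
    (hmax : ∀ β : ℝ, β ^ 3 - lam * β + gs = 0 → β ≤ α) :
    Filter.Tendsto
      (fun X : ℝ => X * ((-(X ^ 2 - lam) +
        (X - α) * Real.sqrt ((X + α) ^ 2 - 2 * gs / α)) / (2 * gs)))
      Filter.atTop (nhds 1) :=
  stmt_15_general lam gs α hgs hroot
end

section
/- Let Q be a quadrangulation of the sphere with N faces and an integer labeling of vertices such that labels differ by exactly one along every edge. Then Q has exactly N + 2 vertices, and if G denotes the embedded planar graph built by Schaeffer's rule (drawing in each face of type (t−1,t,t+1,t) the edge from the corner labeled t+1 to the following corner labeled t, and in each face of type (t+1,t,t+1,t) the diagonal between the two corners labeled t+1), then G is connected, has N edges, and its number of faces equals the number of local minima of the labeling of Q. -/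
/-!
We formalize planar maps (embedded graphs on the oriented sphere) combinatorially, in
the standard way, as a finite set `D` of darts (oriented edge-sides) together with:
* a permutation `σ` rotating the darts counterclockwise around their initial vertex
  (vertices = cycles of `σ`),
* a fixed-point-free involution `a` exchanging the two darts of each edge
  (edges = orbits of `a`, so the number of edges is `|D|/2`),
* faces = cycles of `σ * a`; genus 0 (sphere) is expressed by Euler's formula
  `V - E + F = 2`, and connectedness by transitivity of the action of `⟨σ, a⟩`.
-/

/-- The setoid on darts whose classes are the cycles of a permutation `f`
(used for vertices, with `f = σ`, and for faces, with `f = σ * a`). -/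
def cycleSetoid {D : Type*} (f : Equiv.Perm D) : Setoid D :=
  ⟨f.SameCycle,
    ⟨fun x => Equiv.Perm.SameCycle.refl f x, fun h => h.symm, fun h h' => h.trans h'⟩⟩

/-- A dart `d` starts at a local minimum of the labeling: every dart `d'` with the same
initial vertex (i.e. in the same `σ`-cycle) has `ℓ d' ≤ ℓ (a d')`, that is, the label of
the vertex is `≤` the labels of all its neighbours. -/
def IsMinDart {D : Type*} (σ a : Equiv.Perm D) (ℓ : D → ℤ) (d : D) : Prop :=
  ∀ d' : D, σ.SameCycle d d' → ℓ d' ≤ ℓ (a d')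

/-- Schaeffer's rule: in each quadrangular face (a cycle `(d, φd, φ²d, φ³d)` of
`φ = σ * a`, whose corner labels are `ℓ`), one edge of the new graph `G` is drawn from
the corner `d` with maximal label: in a simple face (labels `(t+1, t, t-1, t)` around the
face, i.e. the opposite corner is labeled `t-1`) it joins `d` to the following corner
`φ d` (labeled `t`); in a confluent face (opposite corner labeled `t+1`) it is the
diagonal joining `d` to the opposite corner `φ² d`. `SchaefferEdge σ a ℓ d d'` says that
the rule draws an edge from corner `d` to corner `d'`. -/
def SchaefferEdge {D : Type*} (σ a : Equiv.Perm D) (ℓ : D → ℤ) (d d' : D) : Prop :=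
  (∀ d'' : D, (σ * a).SameCycle d d'' → ℓ d'' ≤ ℓ d) ∧
    ((ℓ ((σ * a) ((σ * a) d)) = ℓ d - 2 ∧ d' = (σ * a) d) ∨
      (ℓ ((σ * a) ((σ * a) d)) = ℓ d ∧ d' = (σ * a) ((σ * a) d)))

/-- Adjacency in the Schaeffer graph `G`, as a relation on vertices of the
quadrangulation (represented by darts up to `σ.SameCycle`): some face contributes a
Schaeffer edge joining the two vertices. -/
def SchaefferAdj {D : Type*} (σ a : Equiv.Perm D) (ℓ : D → ℤ) (d e : D) : Prop :=
  ∃ p q : D, SchaefferEdge σ a ℓ p q ∧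
    ((σ.SameCycle d p ∧ σ.SameCycle e q) ∨ (σ.SameCycle d q ∧ σ.SameCycle e p))

/-!
Write `φ = σ * a`, so that `ℓ (φ d) = ℓ (a d)` and the corners of the face of `d` are
`d, φ d, φ² d, φ³ d`. Faces have four darts, so there are `N` of them, and Euler's formula
gives `N + 2` vertices.

Call a dart `p` descending if `ℓ (a p) = ℓ p - 1`; a vertex is a local minimum iff it carries
no descending dart. Both endpoints of a Schaeffer edge carry descending darts, and reading the
labels of the face of a descending dart shows that this face draws a Schaeffer edge at its
origin; so the vertices of `G` are the non-minima.

The key step for connectivity: if `p` is descending and its head `a p` is not a minimum, then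
`p` and `a p` are joined in `G`. Turn around the head of `p` towards its next descending dart:
the face of `p` either draws an edge closing the path, or reduces the problem to the next dart
around the head, or to a descending dart one label higher. Both measures are bounded, which
gives a double induction. Around a local minimum `b`, the neighbours `a b` and `a (σ b)` are
joined through the face between them. Following a path of `Q` while tracking a non-minimal
endpoint of the current edge then joins any two non-minima.
-/

namespace Equiv.Perm

open Function

variable {D : Type*} {f : Perm D}

theorem card_quotient_cycleSetoid_mul [Fintype D] {m : ℕ} (hf : ∀ d, minimalPeriod f d = m) :
    Nat.card (Quotient (cycleSetoid f)) * m = Fintype.card D := by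
  classical
  have hfib (q : Quotient (cycleSetoid f)) : Nat.card {x // Quotient.mk _ x = q} = m := by
    induction q using Quotient.inductionOn with | _ d => ?_
    have e : {x // Quotient.mk (cycleSetoid f) x = Quotient.mk _ d} ≃
        MulAction.orbit (Subgroup.zpowers f) d := Equiv.subtypeEquivRight fun x => by
      rw [Quotient.eq, MulAction.mem_orbit_iff, Subgroup.exists_zpowers]
      exact ⟨fun h => h.symm, fun h => Perm.SameCycle.symm h⟩
    rw [Nat.card_congr e, Nat.card_eq_fintype_card (α := MulAction.orbit _ d),
      ← MulAction.minimalPeriod_eq_card, ← hf d]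
    rfl
  calc Nat.card (Quotient (cycleSetoid f)) * m
      = ∑ q : Quotient (cycleSetoid f), Nat.card {x // Quotient.mk _ x = q} := by
        simp only [hfib, Finset.sum_const, Finset.card_univ, smul_eq_mul, Nat.card_eq_fintype_card]
    _ = Fintype.card D := by
        rw [← Nat.card_sigma, Nat.card_congr (Equiv.sigmaFiberEquiv _), Nat.card_eq_fintype_card]

theorem apply_four_of_minimalPeriod_eq_four {d : D} (hd : minimalPeriod f d = 4) :
    f (f (f (f d))) = d := by
  have h := iterate_minimalPeriod (f := f) (x := d)
  rwa [hd] at h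

theorem SameCycle.eq_of_minimalPeriod_eq_four {p x : D} (hp : minimalPeriod f p = 4)
    (h : f.SameCycle p x) : x = p ∨ x = f p ∨ x = f (f p) ∨ x = f (f (f p)) := by
  obtain ⟨i, rfl⟩ := h
  have hmod := MulAction.zpow_smul_mod_minimalPeriod f p i
  simp only [Perm.smul_def, hp] at hmod
  rw [← hmod]
  have h0 : 0 ≤ i % 4 := Int.emod_nonneg i (by norm_num)
  have h4 : i % 4 < 4 := Int.emod_lt_of_pos i (by norm_num)
  interval_cases i % 4 <;> simp [pow_succ]

end Equiv.Perm

namespace Schaeffer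

open Equiv Function Relation

structure IsWellLabelled {D : Type*} (σ a : Perm D) (ℓ : D → ℤ) : Prop where
  involutive : ∀ d, a (a d) = d
  label_σ : ∀ d, ℓ (σ d) = ℓ d
  label_a : ∀ d, ℓ (a d) = ℓ d + 1 ∨ ℓ (a d) = ℓ d - 1
  minimalPeriod_face : ∀ d, minimalPeriod (σ * a) d = 4

variable {D : Type*} {σ a : Perm D} {ℓ : D → ℤ}

local notation "φ" => σ * a

local infix:50 " ∼ " => ReflTransGen (SchaefferAdj σ a ℓ)

theorem not_isMinDart_of_descends {c : D} (h : ℓ (a c) = ℓ c - 1) : ¬ IsMinDart σ a ℓ c :=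
  fun hmin => by have := hmin c .rfl; omega

theorem isMinDart_congr {d d' : D} (h : σ.SameCycle d d') :
    IsMinDart σ a ℓ d ↔ IsMinDart σ a ℓ d' :=
  ⟨fun hd x hx => hd x (h.trans hx), fun hd x hx => hd x (h.symm.trans hx)⟩

instance : Std.Symm (SchaefferAdj σ a ℓ) :=
  ⟨fun _ _ ⟨p, q, he, h⟩ => ⟨p, q, he, h.symm.imp And.symm And.symm⟩⟩

theorem SchaefferEdge.reachable {p q x y : D} (he : SchaefferEdge σ a ℓ p q)
    (hx : σ.SameCycle x p) (hy : σ.SameCycle y q) : x ∼ y :=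
  .single ⟨p, q, he, .inl ⟨hx, hy⟩⟩

def IsNonMinEndpoint (σ a : Perm D) (ℓ : D → ℤ) (x y : D) : Prop :=
  ¬ IsMinDart σ a ℓ y ∧ (σ.SameCycle x y ∨ σ.SameCycle (a x) y)

namespace IsWellLabelled

variable (Q : IsWellLabelled σ a ℓ)
include Q

theorem label_face (d : D) : ℓ (φ d) = ℓ (a d) := Q.label_σ (a d)

theorem face_four (d : D) : φ (φ (φ (φ d))) = d :=
  Perm.apply_four_of_minimalPeriod_eq_four (Q.minimalPeriod_face d)

theorem exists_descends_of_not_isMinDart {d : D} (h : ¬ IsMinDart σ a ℓ d) :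
    ∃ c, σ.SameCycle d c ∧ ℓ (a c) = ℓ c - 1 := by
  simp only [IsMinDart, not_forall, not_le] at h
  obtain ⟨c, hdc, hc⟩ := h
  exact ⟨c, hdc, by rcases Q.label_a c with h' | h' <;> omega⟩

theorem exists_descends_pow [Finite D] {x : D} (h : ¬ IsMinDart σ a ℓ x) :
    ∃ n : ℕ, ℓ (a ((σ ^ n) (σ x))) = ℓ ((σ ^ n) (σ x)) - 1 := by
  obtain ⟨c, hxc, hc⟩ := Q.exists_descends_of_not_isMinDart h
  obtain ⟨n, rfl⟩ := (Perm.sameCycle_apply_left.2 hxc).exists_nat_pow_eq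
  exact ⟨n, hc⟩

theorem schaefferEdge_simple {p : D} (h1 : ℓ (a p) = ℓ p - 1)
    (h2 : ℓ (a (φ p)) = ℓ (φ p) - 1) : SchaefferEdge σ a ℓ p (φ p) := by
  have l1 := Q.label_face p
  have l2 := Q.label_face (φ p)
  have l3 := Q.label_face (φ (φ p))
  have l4 := Q.label_face (φ (φ (φ p)))
  rw [Q.face_four] at l4
  have e3 := Q.label_a (φ (φ p))
  have e4 := Q.label_a (φ (φ (φ p)))
  refine ⟨fun x (hx : (φ).SameCycle p x) => ?_, .inl ⟨by omega, rfl⟩⟩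
  rcases hx.eq_of_minimalPeriod_eq_four (Q.minimalPeriod_face p) with rfl | rfl | rfl | rfl <;>
    omega

theorem schaefferEdge_confluent {p : D} (h1 : ℓ (a p) = ℓ p - 1) (h2 : ℓ (φ (φ p)) = ℓ p)
    (h3 : ℓ (φ (φ (φ p))) = ℓ p - 1) : SchaefferEdge σ a ℓ p (φ (φ p)) := by
  have l1 := Q.label_face p
  refine ⟨fun x (hx : (φ).SameCycle p x) => ?_, .inr ⟨h2, rfl⟩⟩
  rcases hx.eq_of_minimalPeriod_eq_four (Q.minimalPeriod_face p) with rfl | rfl | rfl | rfl <;>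
    omega

theorem descends_of_schaefferEdge_left {p q : D} (he : SchaefferEdge σ a ℓ p q) :
    ℓ (a p) = ℓ p - 1 := by
  have := he.1 (φ p) ⟨1, rfl⟩
  have := Q.label_face p
  rcases Q.label_a p with h | h <;> omega

theorem descends_of_schaefferEdge_right {p q : D} (he : SchaefferEdge σ a ℓ p q) :
    ℓ (a q) = ℓ q - 1 := by
  have l1 := Q.label_face p
  have hp := Q.descends_of_schaefferEdge_left he
  obtain ⟨hmax, ⟨h2, rfl⟩ | ⟨h2, rfl⟩⟩ := he
  · have := Q.label_face (φ p)
    omega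
  · have := hmax (φ (φ (φ p))) ⟨3, rfl⟩
    have := Q.label_face (φ (φ p))
    rcases Q.label_a (φ (φ p)) with h | h <;> omega

theorem exists_schaefferEdge_of_descends {c : D} (hc : ℓ (a c) = ℓ c - 1) :
    ∃ p q, SchaefferEdge σ a ℓ p q ∧ (p = c ∨ q = c) := by
  have l1 := Q.label_face c
  have l2 := Q.label_face (φ c)
  have l3 := Q.label_face (φ (φ c))
  have l4 := Q.label_face (φ (φ (φ c)))
  rw [Q.face_four] at l4
  rcases Q.label_a (φ c) with h2 | h2
  · rcases Q.label_a (φ (φ c)) with h3 | h3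
    · refine ⟨_, _, Q.schaefferEdge_simple (p := φ (φ (φ c))) (by omega) ?_,
        .inr (Q.face_four c)⟩
      rwa [Q.face_four]
    · exact ⟨_, _, Q.schaefferEdge_confluent hc (by omega) (by omega), .inl rfl⟩
  · exact ⟨_, _, Q.schaefferEdge_simple hc (by omega), .inl rfl⟩

theorem exists_schaefferEdge_iff_not_isMinDart (d : D) :
    (∃ p q, SchaefferEdge σ a ℓ p q ∧ (σ.SameCycle d p ∨ σ.SameCycle d q)) ↔
      ¬ IsMinDart σ a ℓ d := by
  constructor
  · rintro ⟨p, q, he, hdp | hdq⟩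
    · exact (isMinDart_congr hdp).not.2
        (not_isMinDart_of_descends (Q.descends_of_schaefferEdge_left he))
    · exact (isMinDart_congr hdq).not.2
        (not_isMinDart_of_descends (Q.descends_of_schaefferEdge_right he))
  · intro h
    obtain ⟨c, hdc, hc⟩ := Q.exists_descends_of_not_isMinDart h
    obtain ⟨p, q, he, rfl | rfl⟩ := Q.exists_schaefferEdge_of_descends hc
    exacts [⟨p, q, he, .inl hdc⟩, ⟨p, q, he, .inr hdc⟩]

theorem reachable_of_sameCycle {x y : D} (hx : ¬ IsMinDart σ a ℓ x) (h : σ.SameCycle x y) :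
    x ∼ y := by
  obtain ⟨p, q, he, hxp | hxq⟩ := (Q.exists_schaefferEdge_iff_not_isMinDart x).2 hx
  · exact (SchaefferEdge.reachable he hxp .rfl).trans
      (symm_of _ (SchaefferEdge.reachable he (h.symm.trans hxp) .rfl))
  · exact (symm_of _ (SchaefferEdge.reachable he .rfl hxq)).trans
      (SchaefferEdge.reachable he .rfl (h.symm.trans hxq))

-- The face of `p` is labelled `t, t - 1, t, t ± 1`; `hb` and `hup` are the recursive calls
-- made from its two corners labelled `t`.
theorem reachable_apply_of_face {p : D} (h1 : ℓ (a p) = ℓ p - 1) (h2 : ℓ (φ (φ p)) = ℓ p)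
    (hb : a (φ p) ∼ a p)
    (hup : ℓ (φ (φ (φ p))) = ℓ p + 1 → a (φ (φ p)) ∼ φ (φ p)) :
    p ∼ a p := by
  have l1 := Q.label_face p
  have l2 := Q.label_face (φ p)
  have l3 := Q.label_face (φ (φ p))
  have l4 := Q.label_face (φ (φ (φ p)))
  rw [Q.face_four] at l4
  have hσb : σ.SameCycle (a (φ p)) (φ (φ p)) := ⟨1, rfl⟩
  rcases Q.label_a (φ (φ p)) with h3 | h3
  · have he := Q.schaefferEdge_simple (p := φ (φ (φ p))) (by omega)
      (by rwa [Q.face_four])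
    rw [Q.face_four] at he
    have hnb : ¬ IsMinDart σ a ℓ (a (φ p)) :=
      not_isMinDart_of_descends (by rw [Q.involutive]; omega)
    calc p ∼ a (φ (φ p)) := symm_of _ (SchaefferEdge.reachable he ⟨1, rfl⟩ .rfl)
      _ ∼ φ (φ p) := hup (by omega)
      _ ∼ a (φ p) := Q.reachable_of_sameCycle ((isMinDart_congr hσb).not.1 hnb) hσb.symm
      _ ∼ a p := hb
  · exact (SchaefferEdge.reachable (Q.schaefferEdge_confluent h1 h2 (by omega)) .rfl hσb).trans hb

theorem reachable_apply_of_descends_of_le [Finite D] (k n : ℕ) {p : D}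
    (h1 : ℓ (a p) = ℓ p - 1) (hk : ∀ x, ℓ x ≤ ℓ p + k)
    (hn : ℓ (a ((σ ^ n) (φ p))) = ℓ ((σ ^ n) (φ p)) - 1) :
    p ∼ a p := by
  induction k using Nat.strong_induction_on generalizing n p with | _ k ihk => ?_
  induction n generalizing p with
  | zero => exact SchaefferEdge.reachable (Q.schaefferEdge_simple h1 hn) .rfl ⟨1, rfl⟩
  | succ n ihn =>
    by_cases hc : ℓ (a (φ p)) = ℓ (φ p) - 1
    · exact SchaefferEdge.reachable (Q.schaefferEdge_simple h1 hc) .rfl ⟨1, rfl⟩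
    have l1 := Q.label_face p
    have l2 := Q.label_face (φ p)
    have l3 := Q.label_face (φ (φ p))
    have h2 : ℓ (φ (φ p)) = ℓ p := by rcases Q.label_a (φ p) with h | h <;> omega
    have hdesc : ℓ (a (a (φ p))) = ℓ (a (φ p)) - 1 := by rw [Q.involutive]; omega
    refine Q.reachable_apply_of_face h1 h2 ?_ fun h3 => ?_
    · have hφ : (σ ^ (n + 1)) (φ p) = (σ ^ n) (φ (a (φ p))) := by
        rw [pow_succ, Perm.mul_apply]
        show _ = (σ ^ n) (σ (a (a (φ p))))
        rw [Q.involutive]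
      have hb := ihn hdesc (fun x => by have := hk x; omega) (by rw [← hφ]; exact hn)
      rw [Q.involutive] at hb
      have hnφ : ¬ IsMinDart σ a ℓ (φ p) :=
        (isMinDart_congr (Perm.sameCycle_pow_right.2 .rfl)).not.2 (not_isMinDart_of_descends hn)
      exact hb.trans (Q.reachable_of_sameCycle hnφ (Perm.SameCycle.symm ⟨1, rfl⟩))
    · have := hk (φ (φ (φ p)))
      have hnφφ : ¬ IsMinDart σ a ℓ (φ (φ p)) :=
        (isMinDart_congr ⟨1, rfl⟩).not.1 (not_isMinDart_of_descends hdesc)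
      obtain ⟨n', hn'⟩ := Q.exists_descends_pow hnφφ
      have hup := ihk (k - 1) (by omega) n' (p := a (φ (φ p))) (by rw [Q.involutive]; omega)
        (fun x => by have := hk x; omega) (by rw [Perm.mul_apply, Q.involutive]; exact hn')
      rwa [Q.involutive] at hup

theorem reachable_apply_of_descends [Finite D] {p : D} (h1 : ℓ (a p) = ℓ p - 1)
    (hnm : ¬ IsMinDart σ a ℓ (a p)) : p ∼ a p := by
  obtain ⟨n, hn⟩ := Q.exists_descends_pow hnm
  have : Nonempty D := ⟨p⟩
  obtain ⟨x₀, hx₀⟩ := Finite.exists_max ℓ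
  exact Q.reachable_apply_of_descends_of_le (ℓ x₀ - ℓ p).toNat n h1
    (fun x => by have := hx₀ x; omega) hn

theorem reachable_apply [Finite D] {x : D} (hx : ¬ IsMinDart σ a ℓ x)
    (hax : ¬ IsMinDart σ a ℓ (a x)) : x ∼ a x := by
  rcases Q.label_a x with h | h
  · have hx' := Q.reachable_apply_of_descends (p := a x) (by rw [Q.involutive]; omega)
      (by rwa [Q.involutive])
    rw [Q.involutive] at hx'
    exact symm_of _ hx'
  · exact Q.reachable_apply_of_descends h hax

theorem reachable_of_isMinDart [Finite D] {b : D} (hmin : IsMinDart σ a ℓ b) :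
    a (σ b) ∼ a b := by
  have lc := Q.label_σ b
  have lab : ℓ (a b) = ℓ b + 1 := by
    have := hmin b .rfl
    rcases Q.label_a b with h | h <;> omega
  have lac : ℓ (a (σ b)) = ℓ b + 1 := by
    have := hmin (σ b) ⟨1, rfl⟩
    rcases Q.label_a (σ b) with h | h <;> omega
  have hab : φ (φ (φ (σ b))) = a b := by
    rw [← Q.face_four (a b)]
    show _ = φ (φ (φ (σ (a (a b)))))
    rw [Q.involutive]
  have l1 := Q.label_face (σ b)
  have l2 := Q.label_face (φ (σ b))
  have l3 := Q.label_face (φ (φ (σ b)))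
  have l4 := Q.label_face (φ (φ (φ (σ b))))
  rw [Q.face_four, hab] at l4
  rw [hab] at l3
  have hsc : σ.SameCycle (a (σ b)) (φ (σ b)) := ⟨1, rfl⟩
  have hnac : ¬ IsMinDart σ a ℓ (a (σ b)) :=
    not_isMinDart_of_descends (by rw [Q.involutive]; omega)
  rcases Q.label_a (φ (σ b)) with h | h
  · have he := Q.schaefferEdge_simple (p := φ (φ (σ b))) (by omega) (by rw [hab]; omega)
    rw [hab] at he
    calc a (σ b) ∼ φ (σ b) := Q.reachable_of_sameCycle hnac hsc
      _ ∼ a (φ (σ b)) := Q.reachable_apply ((isMinDart_congr hsc).not.1 hnac)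
          (not_isMinDart_of_descends (by rw [Q.involutive]; omega))
      _ ∼ a b := SchaefferEdge.reachable he ⟨1, rfl⟩ .rfl
  · have he := Q.schaefferEdge_confluent (p := φ (σ b)) (by omega) (by rw [hab]; omega)
      (by rw [Q.face_four]; omega)
    rw [hab] at he
    exact SchaefferEdge.reachable he hsc .rfl

theorem exists_isNonMinEndpoint (x : D) : ∃ y, IsNonMinEndpoint σ a ℓ x y := by
  rcases Q.label_a x with h | h
  · exact ⟨a x, not_isMinDart_of_descends (by rw [Q.involutive]; omega), .inr .rfl⟩
  · exact ⟨x, not_isMinDart_of_descends h, .inl .rfl⟩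

theorem reachable_of_isNonMinEndpoint [Finite D] {x y y' : D} (hy : IsNonMinEndpoint σ a ℓ x y)
    (hy' : IsNonMinEndpoint σ a ℓ x y') : y ∼ y' := by
  have across {z z' : D} (hz : ¬ IsMinDart σ a ℓ z) (hz' : ¬ IsMinDart σ a ℓ z')
      (hxz : σ.SameCycle x z) (hxz' : σ.SameCycle (a x) z') : z ∼ z' :=
    calc z ∼ x := Q.reachable_of_sameCycle hz hxz.symm
      _ ∼ a x :=
        Q.reachable_apply ((isMinDart_congr hxz).not.2 hz) ((isMinDart_congr hxz').not.2 hz')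
      _ ∼ z' := Q.reachable_of_sameCycle ((isMinDart_congr hxz').not.2 hz') hxz'
  obtain ⟨hy, hxy | hxy⟩ := hy <;> obtain ⟨hy', hxy' | hxy'⟩ := hy'
  · exact Q.reachable_of_sameCycle hy (hxy.symm.trans hxy')
  · exact across hy hy' hxy hxy'
  · exact symm_of _ (across hy' hy hxy' hxy)
  · exact Q.reachable_of_sameCycle hy (hxy.symm.trans hxy')

theorem reachable_of_isNonMinEndpoint_σ [Finite D] {x y y' : D}
    (hy : IsNonMinEndpoint σ a ℓ x y) (hy' : IsNonMinEndpoint σ a ℓ (σ x) y') :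
    y ∼ y' := by
  have hxσx : σ.SameCycle x (σ x) := ⟨1, rfl⟩
  obtain ⟨hy', hxy' | hxy'⟩ := hy'
  · exact Q.reachable_of_isNonMinEndpoint hy ⟨hy', .inl (hxσx.trans hxy')⟩
  by_cases hx : IsMinDart σ a ℓ x
  · obtain ⟨hy, hxy | hxy⟩ := hy
    · exact absurd ((isMinDart_congr hxy).1 hx) hy
    have hnσx := (isMinDart_congr hxy').not.2 hy'
    calc y ∼ a x := Q.reachable_of_sameCycle hy hxy.symm
      _ ∼ a (σ x) := symm_of _ (Q.reachable_of_isMinDart hx)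
      _ ∼ y' := Q.reachable_of_sameCycle hnσx hxy'
  · exact (Q.reachable_of_isNonMinEndpoint hy ⟨hx, .inl .rfl⟩).trans
      (Q.reachable_of_isNonMinEndpoint ⟨hx, .inl hxσx.symm⟩ ⟨hy', .inr hxy'⟩)

theorem reachable_of_reflTransGen [Finite D] {d e : D}
    (h : ReflTransGen (fun x y => σ x = y ∨ a x = y) d e) {y y' : D}
    (hy : IsNonMinEndpoint σ a ℓ d y) (hy' : IsNonMinEndpoint σ a ℓ e y') : y ∼ y' := by
  induction h generalizing y' with
  | refl => exact Q.reachable_of_isNonMinEndpoint hy hy'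
  | @tail b c _ hbc ih =>
    obtain ⟨z, hz⟩ := Q.exists_isNonMinEndpoint b
    refine (ih hz).trans ?_
    rcases hbc with rfl | rfl
    · exact Q.reachable_of_isNonMinEndpoint_σ hz hy'
    · obtain ⟨hy', hby'⟩ := hy'
      rw [Q.involutive] at hby'
      exact Q.reachable_of_isNonMinEndpoint hz ⟨hy', hby'.symm⟩

end IsWellLabelled

end Schaeffer

theorem stmt_17_general {D : Type} [Fintype D]
    (σ a : Equiv.Perm D) (ℓ : D → ℤ) (N : ℕ)
    (hinv : ∀ d : D, a (a d) = d)
    (hconn : ∀ d d' : D, Relation.ReflTransGen (fun x y => σ x = y ∨ a x = y) d d')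
    (hvert : ∀ d : D, ℓ (σ d) = ℓ d)
    (hedge : ∀ d : D, ℓ (a d) = ℓ d + 1 ∨ ℓ (a d) = ℓ d - 1)
    (hquad : ∀ d : D, Function.minimalPeriod (⇑(σ * a)) d = 4)
    (hcard : Fintype.card D = 4 * N)
    (hEuler : Nat.card (Quotient (cycleSetoid σ)) + Nat.card (Quotient (cycleSetoid (σ * a)))
      = Fintype.card D / 2 + 2) :
    -- (1) `Q` has `N + 2` vertices
    Nat.card (Quotient (cycleSetoid σ)) = N + 2 ∧
    -- (2) `G` has `N` edges, one per face of `Q`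
    Nat.card (Quotient (cycleSetoid (σ * a))) = N ∧
    -- (3) `G` is connected
    (∀ d e : D, ¬ IsMinDart σ a ℓ d → ¬ IsMinDart σ a ℓ e →
      Relation.ReflTransGen (SchaefferAdj σ a ℓ) d e) ∧
    -- (4) the vertices of `G` are exactly the non-local-minima of `Q`
    (∀ d : D, (∃ p q : D, SchaefferEdge σ a ℓ p q ∧ (σ.SameCycle d p ∨ σ.SameCycle d q))
      ↔ ¬ IsMinDart σ a ℓ d) ∧
    -- (5) the number of faces of `G` equals the number of local minima of `Q`
    ((N : ℤ)
        - Nat.card {v : Quotient (cycleSetoid σ) //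
            ¬ ∀ d : D, Quotient.mk (cycleSetoid σ) d = v → ℓ d ≤ ℓ (a d)}
        + 2
      = Nat.card {v : Quotient (cycleSetoid σ) //
          ∀ d : D, Quotient.mk (cycleSetoid σ) d = v → ℓ d ≤ ℓ (a d)}) := by
  classical
  have Q : Schaeffer.IsWellLabelled σ a ℓ := ⟨hinv, hvert, hedge, hquad⟩
  have hF : Nat.card (Quotient (cycleSetoid (σ * a))) = N := by
    have := Equiv.Perm.card_quotient_cycleSetoid_mul hquad
    omega
  have hV : Nat.card (Quotient (cycleSetoid σ)) = N + 2 := by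
    rw [hcard, hF] at hEuler
    omega
  refine ⟨hV, hF, fun d e hd he => Q.reachable_of_reflTransGen (hconn d e) ⟨hd, .inl .rfl⟩
    ⟨he, .inl .rfl⟩, Q.exists_schaefferEdge_iff_not_isMinDart, ?_⟩
  simp only [Nat.card_eq_fintype_card] at hV ⊢
  rw [Fintype.card_subtype_compl]
  have := Fintype.card_subtype_le fun v : Quotient (cycleSetoid σ) =>
    ∀ d : D, Quotient.mk (cycleSetoid σ) d = v → ℓ d ≤ ℓ (a d)
  omega

/-- **Lemma 1 of the paper.** Let `Q` be a quadrangulation of the sphere with `N` faces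
(`4N` darts, all faces of degree 4, genus 0 by Euler's formula) with integer labels on
its vertices differing by exactly one along every edge. Then:
1. `Q` has exactly `N + 2` vertices;
2. the Schaeffer graph `G` has `N` edges (one per face of `Q`);
3. `G` is connected: any two non-local-minimum vertices are joined by a path of
   Schaeffer edges;
4. the vertices of `G` (endpoints of Schaeffer edges) are exactly the vertices of `Q`
   that are not local minima of the labeling;
5. consequently (Euler's formula for the connected planar map `G`, with `N` edges and
   the non-minima as vertices) the number of faces of `G`,
   `F(G) = N - V(G) + 2`, equals the number of local minima of the labeling of `Q`. -/
theorem stmt_17 {D : Type} [Fintype D] [DecidableEq D]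
    (σ a : Equiv.Perm D) (ℓ : D → ℤ) (N : ℕ) (hNpos : 0 < N)
    (hinv : ∀ d : D, a (a d) = d) (hfpf : ∀ d : D, a d ≠ d)
    (hconn : ∀ d d' : D, Relation.ReflTransGen (fun x y => σ x = y ∨ a x = y) d d')
    (hvert : ∀ d : D, ℓ (σ d) = ℓ d)
    (hedge : ∀ d : D, ℓ (a d) = ℓ d + 1 ∨ ℓ (a d) = ℓ d - 1)
    (hquad : ∀ d : D, Function.minimalPeriod (⇑(σ * a)) d = 4)
    (hcard : Fintype.card D = 4 * N)
    (hEuler : Nat.card (Quotient (cycleSetoid σ)) + Nat.card (Quotient (cycleSetoid (σ * a)))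
      = Fintype.card D / 2 + 2) :
    -- (1) `Q` has `N + 2` vertices
    Nat.card (Quotient (cycleSetoid σ)) = N + 2 ∧
    -- (2) `G` has `N` edges, one per face of `Q`
    Nat.card (Quotient (cycleSetoid (σ * a))) = N ∧
    -- (3) `G` is connected
    (∀ d e : D, ¬ IsMinDart σ a ℓ d → ¬ IsMinDart σ a ℓ e →
      Relation.ReflTransGen (SchaefferAdj σ a ℓ) d e) ∧
    -- (4) the vertices of `G` are exactly the non-local-minima of `Q`
    (∀ d : D, (∃ p q : D, SchaefferEdge σ a ℓ p q ∧ (σ.SameCycle d p ∨ σ.SameCycle d q))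
      ↔ ¬ IsMinDart σ a ℓ d) ∧
    -- (5) the number of faces of `G` equals the number of local minima of `Q`
    ((N : ℤ)
        - Nat.card {v : Quotient (cycleSetoid σ) //
            ¬ ∀ d : D, Quotient.mk (cycleSetoid σ) d = v → ℓ d ≤ ℓ (a d)}
        + 2
      = Nat.card {v : Quotient (cycleSetoid σ) //
          ∀ d : D, Quotient.mk (cycleSetoid σ) d = v → ℓ d ≤ ℓ (a d)}) :=
  stmt_17_general σ a ℓ N hinv hconn hvert hedge hquad hcard hEuler
end

section
/- Let M be a planar map with integer labels on its vertices differing by at most one along each edge, and suppose M has a unique local minimum v₀, labeled 0. Then for every vertex v of M, the label of v equals the graph distance from v to v₀ in M. -/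
/-!
Since labels change by at most one along an edge, a geodesic from `v₀` to `v` shows
`ℓ v ≤ dist v₀ v`. Conversely, every vertex `v ≠ v₀` fails to be a local minimum, so it has a
neighbour labelled `ℓ v - 1`; following such neighbours descends from `v` to `v₀` in exactly
`ℓ v` steps, and finiteness makes `v₀` a global minimum so that the descent cannot overshoot.
-/

namespace SimpleGraph

variable {V : Type} {G : SimpleGraph V} {ℓ : V → ℤ}

theorem Walk.abs_sub_le_length (hlab : ∀ u v, G.Adj u v → |ℓ u - ℓ v| ≤ 1) :
    ∀ {a b : V} (p : G.Walk a b), |ℓ a - ℓ b| ≤ p.length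
  | _, _, .nil => by simp
  | a, b, .cons (v := c) h q => by
    calc |ℓ a - ℓ b| ≤ |ℓ a - ℓ c| + |ℓ c - ℓ b| := abs_sub_le _ _ _
      _ ≤ 1 + q.length := add_le_add (hlab _ _ h) (abs_sub_le_length hlab q)
      _ = (q.cons h).length := by simp [add_comm]

theorem Reachable.abs_sub_le_dist (hlab : ∀ u v, G.Adj u v → |ℓ u - ℓ v| ≤ 1) {u v : V}
    (h : G.Reachable u v) : |ℓ u - ℓ v| ≤ G.dist u v := by
  obtain ⟨p, hp⟩ := h.exists_walk_length_eq_dist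
  exact hp ▸ p.abs_sub_le_length hlab

theorem exists_adj_eq_sub_one_of_not_isLocalMin (hlab : ∀ u v, G.Adj u v → |ℓ u - ℓ v| ≤ 1)
    {v : V} (hv : ¬ ∀ u, G.Adj v u → ℓ v ≤ ℓ u) : ∃ u, G.Adj v u ∧ ℓ u = ℓ v - 1 := by
  push Not at hv
  obtain ⟨u, hadj, hlt⟩ := hv
  have := abs_le.mp (hlab v u hadj)
  exact ⟨u, hadj, by omega⟩

theorem exists_walk_length_eq_of_exists_adj_eq_sub_one {v₀ : V} (hbot : ∀ v, ℓ v₀ ≤ ℓ v)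
    (hdesc : ∀ v, v ≠ v₀ → ∃ u, G.Adj v u ∧ ℓ u = ℓ v - 1) :
    ∀ (n : ℕ) (v : V), ℓ v = ℓ v₀ + n → ∃ p : G.Walk v v₀, p.length = n
  | 0, v, hv => by
    obtain rfl : v = v₀ := by
      by_contra hne
      obtain ⟨u, -, hu⟩ := hdesc v hne
      push_cast at hv
      linarith [hbot u]
    exact ⟨.nil, rfl⟩
  | n + 1, v, hv => by
    obtain ⟨u, hadj, hu⟩ := hdesc v (by rintro rfl; omega)
    obtain ⟨p, hp⟩ :=
      exists_walk_length_eq_of_exists_adj_eq_sub_one hbot hdesc n u (by push_cast at hv; omega)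
    exact ⟨p.cons hadj, by simp [hp]⟩

theorem dist_le_sub_of_exists_adj_eq_sub_one {v₀ : V} (hbot : ∀ v, ℓ v₀ ≤ ℓ v)
    (hdesc : ∀ v, v ≠ v₀ → ∃ u, G.Adj v u ∧ ℓ u = ℓ v - 1) (v : V) :
    (G.dist v₀ v : ℤ) ≤ ℓ v - ℓ v₀ := by
  have := hbot v
  obtain ⟨p, hp⟩ := exists_walk_length_eq_of_exists_adj_eq_sub_one hbot hdesc
    (ℓ v - ℓ v₀).toNat v (by omega)
  have := dist_comm (G := G) ▸ dist_le p
  omega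

theorem le_of_forall_isLocalMin_eq [Finite V] {v₀ : V}
    (huniq : ∀ w, (∀ u, G.Adj w u → ℓ w ≤ ℓ u) → w = v₀) (v : V) : ℓ v₀ ≤ ℓ v := by
  have : Nonempty V := ⟨v⟩
  obtain ⟨w, hw⟩ := Finite.exists_min ℓ
  obtain rfl := huniq w fun u _ => hw u
  exact hw v

end SimpleGraph

open SimpleGraph in
/-- Loops and multiple edges of the map affect neither distances nor local minima, so the map
is modelled by its underlying simple graph. -/
theorem stmt_18_general {V : Type} [Fintype V] (G : SimpleGraph V) (hconn : G.Connected)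
    (ℓ : V → ℤ)
    (hlab : ∀ u v : V, G.Adj u v → |ℓ u - ℓ v| ≤ 1)
    (v₀ : V) (h₀ : ℓ v₀ = 0)
    (huniq : ∀ w : V, (∀ u : V, G.Adj w u → ℓ w ≤ ℓ u) → w = v₀) :
    ∀ v : V, ℓ v = (G.dist v₀ v : ℤ) := by
  intro v
  have hbot := le_of_forall_isLocalMin_eq huniq
  have hdesc : ∀ w, w ≠ v₀ → ∃ u, G.Adj w u ∧ ℓ u = ℓ w - 1 := fun w hw =>
    exists_adj_eq_sub_one_of_not_isLocalMin hlab fun hmin => hw (huniq w hmin)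
  have hupper := abs_le.mp ((hconn v₀ v).abs_sub_le_dist hlab)
  have hlower := dist_le_sub_of_exists_adj_eq_sub_one hbot hdesc v
  omega

/-- Let `M` be a (connected) planar map with integer labels on its vertices differing by
at most one along each edge, having a unique local minimum `v₀`, labeled `0`. Then the
label of every vertex equals its graph distance to `v₀`. (Loops and multiple edges
affect neither distances nor the local-minimum condition, so the underlying simple
graph carries all the relevant structure.) -/
theorem stmt_18 {V : Type} [Fintype V] (G : SimpleGraph V) (hconn : G.Connected)
    (ℓ : V → ℤ)
    (hlab : ∀ u v : V, G.Adj u v → |ℓ u - ℓ v| ≤ 1)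
    (v₀ : V) (h₀ : ℓ v₀ = 0)
    (hmin : ∀ u : V, G.Adj v₀ u → ℓ v₀ ≤ ℓ u)
    (huniq : ∀ w : V, (∀ u : V, G.Adj w u → ℓ w ≤ ℓ u) → w = v₀) :
    ∀ v : V, ℓ v = (G.dist v₀ v : ℤ) :=
  stmt_18_general G hconn ℓ hlab v₀ h₀ huniq
end

section
/- Let Σ(T) and higher continuum data be given by: α > 0 largest root of α³ − λα + 𝔤_s = 0 and Σ = √(α² − 𝔤_s/(2α)). Then as 𝔤_s → ∞ with Λ := λ − 3(𝔤_s/2)^{2/3} held fixed, one has α = (𝔤_s/2)^{1/3} + √(Λ/3) + O(𝔤_s^{−1/3}) and Σ = (3Λ)^{1/4}(𝔤_s/2)^{1/6} + O(𝔤_s^{−1/6}). -/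
open Filter Asymptotics Set

/-!
Write `c = (𝔤ₛ/2)^{1/3}` and `s = √(Λ/3)`, so that the cubic is `f x = x³ - 3(s² + c²)x + 2c³`.
Then `f (c + s) = -2s³ < 0` while `f (c + s + δ) = 3(c + s)δ² + δ³ > 0` for `δ = s²/(3c)`, and `f`
is increasing on `[c, ∞)`; so the largest root lies in `[c + s, c + s + s²/(3c)]`. By the cubic,
`α² - c³/α = 3(s² + c²) - 3c³/α`, which that bracket pins between `3cs` and `3cs + 3s²`. Since
`√(3cs) = (3Λ)^{1/4} c^{1/2}`, taking square roots costs `O(c^{-1/2})`.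
-/

lemma cubic_strictMonoOn {p q m : ℝ} (hm : 0 ≤ m) (hp : p ≤ 3 * m ^ 2) :
    StrictMonoOn (fun x : ℝ => x ^ 3 - p * x + q) (Ici m) := by
  intro x hx y hy hxy
  simp only [mem_Ici] at hx hy
  have hsum : p < x ^ 2 + x * y + y ^ 2 := by nlinarith
  have hdiff : (y ^ 3 - p * y + q) - (x ^ 3 - p * x + q) = (y - x) * (x ^ 2 + x * y + y ^ 2 - p) := by
    ring
  nlinarith [mul_pos (sub_pos.2 hxy) (sub_pos.2 hsum)]

lemma mem_Icc_of_isGreatest_zeros {f : ℝ → ℝ} {a b r : ℝ} (hab : a ≤ b)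
    (hf : ContinuousOn f (Icc a b)) (hmono : StrictMonoOn f (Ici a)) (ha : f a ≤ 0) (hb : 0 ≤ f b)
    (hr : IsGreatest {x | f x = 0} r) : r ∈ Icc a b := by
  obtain ⟨β, hβ, hfβ⟩ := intermediate_value_Icc hab hf ⟨ha, hb⟩
  have har : a ≤ r := hβ.1.trans (hr.2 hfβ)
  refine ⟨har, not_lt.1 fun hbr => ?_⟩
  have := hmono (mem_Ici.2 hab) (mem_Ici.2 har) hbr
  rw [hr.1] at this
  linarith

lemma abs_sqrt_sub_le {x t : ℝ} (ht : 0 < t) (hx : t ^ 2 ≤ x) :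
    |√x - t| ≤ (x - t ^ 2) / (2 * t) := by
  set d := (x - t ^ 2) / (2 * t)
  have hd : 0 ≤ d := div_nonneg (by linarith) (by positivity)
  have htd : 2 * t * d = x - t ^ 2 := mul_div_cancel₀ _ (by positivity)
  have hupper : √x ≤ t + d :=
    Real.sqrt_le_iff.2 ⟨by positivity, by nlinarith [sq_nonneg d]⟩
  rw [abs_of_nonneg (sub_nonneg.2 (Real.le_sqrt_of_sq_le hx))]
  linarith

lemma isBigO_inv_div_rpow {a : ℝ} (ha : 0 < a) (p : ℝ) :
    (fun x : ℝ => ((x / a) ^ p)⁻¹) =O[atTop] fun x => x ^ (-p) := by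
  refine (isBigO_const_mul_self (a ^ p) _ atTop).congr' ?_ EventuallyEq.rfl
  filter_upwards [eventually_ge_atTop 0] with x hx
  rw [Real.div_rpow hx ha.le, Real.rpow_neg hx, inv_div, div_eq_mul_inv]

section Cubic

variable {s c α : ℝ}

lemma greatest_root_mem_Icc (hs : 0 < s) (hc : 0 < c)
    (hα : IsGreatest {x | x ^ 3 - (3 * s ^ 2 + 3 * c ^ 2) * x + 2 * c ^ 3 = 0} α) :
    α ∈ Icc (c + s) (c + s + s ^ 2 / (3 * c)) := by
  have hδ : 0 < s ^ 2 / (3 * c) := by positivity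
  refine mem_Icc_of_isGreatest_zeros (by linarith) (by fun_prop)
    (cubic_strictMonoOn (by positivity) (by nlinarith)) ?_ ?_ hα
  · nlinarith [pow_pos hs 3]
  · set δ := s ^ 2 / (3 * c) with hδ_def
    have h3cδ : 3 * c * δ = s ^ 2 := by rw [hδ_def]; field_simp
    have : (c + s + δ) ^ 3 - (3 * s ^ 2 + 3 * c ^ 2) * (c + s + δ) + 2 * c ^ 3
        = 3 * (c + s) * δ ^ 2 + δ ^ 3 := by
      linear_combination (2 * s) * h3cδ
    rw [this]; positivity

lemma sq_sub_div_mem_Icc (hs : 0 < s) (hc : 0 < c)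
    (hroot : α ^ 3 - (3 * s ^ 2 + 3 * c ^ 2) * α + 2 * c ^ 3 = 0)
    (hα : α ∈ Icc (c + s) (c + s + s ^ 2 / (3 * c))) :
    α ^ 2 - c ^ 3 / α ∈ Icc (3 * c * s) (3 * c * s + 3 * s ^ 2) := by
  obtain ⟨hlo, hhi⟩ := hα
  have hα0 : 0 < α := by linarith
  have hhi' : 3 * c * α ≤ 3 * c ^ 2 + 3 * c * s + s ^ 2 := by
    have : 3 * c * (s ^ 2 / (3 * c)) = s ^ 2 := by field_simp
    nlinarith [mul_le_mul_of_nonneg_left hhi (by positivity : 0 ≤ 3 * c)]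
  have heq : α ^ 2 - c ^ 3 / α = 3 * (s ^ 2 + c ^ 2 - c ^ 3 / α) := by
    field_simp; linear_combination hroot
  rw [heq]
  constructor
  · have : c ^ 3 / α ≤ s ^ 2 + c ^ 2 - c * s := by
      rw [div_le_iff₀ hα0]
      nlinarith [mul_nonneg (sub_nonneg.2 hlo) (by nlinarith : 0 ≤ s ^ 2 - c * s + c ^ 2)]
    linarith
  · have : c ^ 2 - c * s ≤ c ^ 3 / α := by
      rw [le_div_iff₀ hα0]
      rcases le_total c s with hcs | hsc
      · nlinarith [mul_nonneg (mul_nonneg hc.le hα0.le) (sub_nonneg.2 hcs)]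
      · nlinarith [mul_le_mul_of_nonneg_right hhi' (sub_nonneg.2 hsc)]
    linarith

end Cubic

lemma greatest_root_bounds {s c T gs α : ℝ} (hs : 0 < s) (hc : 0 < c) (hT : 0 < T)
    (hT2 : T ^ 2 = 3 * c * s) (hgs : gs = 2 * c ^ 3)
    (hα : IsGreatest {x | x ^ 3 - (3 * s ^ 2 + 3 * c ^ 2) * x + gs = 0} α) :
    |α - (c + s)| ≤ s ^ 2 / 3 * c⁻¹ ∧ |√(α ^ 2 - gs / (2 * α)) - T| ≤ 3 * s ^ 2 / (2 * T) := by
  subst hgs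
  have hmem := greatest_root_mem_Icc hs hc hα
  have hsq := sq_sub_div_mem_Icc hs hc hα.1 hmem
  rw [← hT2] at hsq
  rw [mul_div_mul_left _ _ two_ne_zero]
  constructor
  · rw [abs_of_nonneg (by linarith [hmem.1])]
    have : s ^ 2 / (3 * c) = s ^ 2 / 3 * c⁻¹ := by ring
    linarith [hmem.2]
  · calc |√(α ^ 2 - c ^ 3 / α) - T| ≤ (α ^ 2 - c ^ 3 / α - T ^ 2) / (2 * T) :=
          abs_sqrt_sub_le hT hsq.1
      _ ≤ 3 * s ^ 2 / (2 * T) := by gcongr; linarith [hsq.2]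

lemma norm_sub_le_of_isGreatest_roots {Λ gs α : ℝ} (hΛ : 0 < Λ) (hgs : 0 < gs)
    (hα : IsGreatest {x | x ^ 3 - (Λ + 3 * (gs / 2) ^ ((2 : ℝ) / 3)) * x + gs = 0} α) :
    ‖α - ((gs / 2) ^ ((1 : ℝ) / 3) + √(Λ / 3))‖ ≤ Λ / 9 * ‖((gs / 2) ^ ((1 : ℝ) / 3))⁻¹‖ ∧
      ‖√(α ^ 2 - gs / (2 * α)) - (3 * Λ) ^ ((1 : ℝ) / 4) * (gs / 2) ^ ((1 : ℝ) / 6)‖ ≤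
        Λ / (2 * (3 * Λ) ^ ((1 : ℝ) / 4)) * ‖((gs / 2) ^ ((1 : ℝ) / 6))⁻¹‖ := by
  set s := √(Λ / 3)
  have hs : 0 < s := Real.sqrt_pos.2 (by positivity)
  have hΛs : Λ = 3 * s ^ 2 := by rw [Real.sq_sqrt (by positivity)]; ring
  have h3Λ : (3 * Λ) ^ ((1 : ℝ) / 4) = √(3 * s) := by
    rw [hΛs, show 3 * (3 * s ^ 2) = (3 * s) ^ (2 : ℝ) by norm_cast; ring,
      ← Real.rpow_mul (by positivity), Real.sqrt_eq_rpow]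
    norm_num
  have hy : 0 ≤ gs / 2 := by positivity
  have hc : 0 < (gs / 2) ^ ((1 : ℝ) / 3) := by positivity
  have hgs3 : gs = 2 * ((gs / 2) ^ ((1 : ℝ) / 3)) ^ 3 := by
    rw [← Real.rpow_mul_natCast hy]; norm_num; ring
  have hc2 : (gs / 2) ^ ((2 : ℝ) / 3) = ((gs / 2) ^ ((1 : ℝ) / 3)) ^ 2 := by
    rw [← Real.rpow_mul_natCast hy]; norm_num
  have hT2 : ((3 * Λ) ^ ((1 : ℝ) / 4) * (gs / 2) ^ ((1 : ℝ) / 6)) ^ 2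
      = 3 * (gs / 2) ^ ((1 : ℝ) / 3) * s := by
    rw [h3Λ, mul_pow, Real.sq_sqrt (by positivity), ← Real.rpow_mul_natCast hy]; norm_num; ring
  rw [hc2, hΛs] at hα
  obtain ⟨h1, h2⟩ := greatest_root_bounds hs hc (by positivity) hT2 hgs3 hα
  have hu : 0 < (gs / 2) ^ ((1 : ℝ) / 6) := by positivity
  simp only [Real.norm_eq_abs, abs_inv, abs_of_pos hc, abs_of_pos hu]
  refine ⟨h1.trans_eq (by rw [hΛs]; ring), h2.trans_eq ?_⟩
  rw [h3Λ, hΛs]; field_simp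

/-- DT limit of generalized CDT: with `λ = Λ + 3(𝔤ₛ/2)^{2/3}` (`Λ > 0` fixed), `α(𝔤ₛ)`
the largest root of `α³ - λα + 𝔤ₛ = 0` and `Σ = √(α² - 𝔤ₛ/(2α))`, as `𝔤ₛ → ∞` one has
`α = (𝔤ₛ/2)^{1/3} + √(Λ/3) + O(𝔤ₛ^{-1/3})` and
`Σ = (3Λ)^{1/4}(𝔤ₛ/2)^{1/6} + O(𝔤ₛ^{-1/6})`. -/
theorem stmt_19 (Λ : ℝ) (hΛ : 0 < Λ) (α : ℝ → ℝ)
    (hroot : ∀ gs : ℝ, 0 < gs →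
      (α gs) ^ 3 - (Λ + 3 * (gs / 2) ^ ((2 : ℝ) / 3)) * α gs + gs = 0 ∧
        ∀ β : ℝ, β ^ 3 - (Λ + 3 * (gs / 2) ^ ((2 : ℝ) / 3)) * β + gs = 0 → β ≤ α gs) :
    (fun gs : ℝ => α gs - ((gs / 2) ^ ((1 : ℝ) / 3) + Real.sqrt (Λ / 3)))
        =O[atTop] (fun gs : ℝ => gs ^ (-(1 : ℝ) / 3)) ∧
      (fun gs : ℝ =>
          Real.sqrt ((α gs) ^ 2 - gs / (2 * α gs))
            - (3 * Λ) ^ ((1 : ℝ) / 4) * (gs / 2) ^ ((1 : ℝ) / 6))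
        =O[atTop] (fun gs : ℝ => gs ^ (-(1 : ℝ) / 6)) := by
  have hest := (eventually_gt_atTop 0).mono fun gs hgs =>
    norm_sub_le_of_isGreatest_roots hΛ hgs ⟨(hroot gs hgs).1, fun β hβ => (hroot gs hgs).2 β hβ⟩
  obtain ⟨hα, hsig⟩ := eventually_and.1 hest
  rw [neg_div, neg_div]
  exact ⟨(IsBigO.of_bound _ hα).trans (isBigO_inv_div_rpow two_pos _),
    (IsBigO.of_bound _ hsig).trans (isBigO_inv_div_rpow two_pos _)⟩
end
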